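/- Let C ⊆ F_q^{9×m} be an F_q-linear rank-metric code representing the non-Pappus q-matroid NP(q). Then dim C = 3m, and the minimum rank distance of C is at least 6; in particular m ≥ 6. -/

import Mathlib

open Matrix

variable {F : Type*} [Field F]

/-- Column space of a matrix: the span of its columns. -/
def colSpace {n m : ℕ} (M : Matrix (Fin n) (Fin m) F) : Submodule F (Fin n → F) :=
  Submodule.span F (Set.range Mᵀ)

lemma colSpace_le_iff {n m : ℕ} (M : Matrix (Fin n) (Fin m) F) (U : Submodule F (Fin n → F)) :
    colSpace M ≤ U ↔ ∀ j, Mᵀ j ∈ U := by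
  rw [colSpace, Submodule.span_le]; exact Set.range_subset_iff

/-- `C(U)`: the codewords of `C` whose column space is contained in `U`. -/
def codeCU {n m : ℕ} (C : Submodule F (Matrix (Fin n) (Fin m) F))
    (U : Submodule F (Fin n → F)) : Submodule F (Matrix (Fin n) (Fin m) F) where
  carrier := {M | M ∈ C ∧ colSpace M ≤ U}
  add_mem' := by
    rintro a b ⟨haC, ha⟩ ⟨hbC, hb⟩
    refine ⟨C.add_mem haC hbC, (colSpace_le_iff _ _).2 fun j => ?_⟩
    have h := U.add_mem ((colSpace_le_iff a U).1 ha j) ((colSpace_le_iff b U).1 hb j)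
    rw [Matrix.transpose_add]; exact h
  zero_mem' := by
    exact ⟨C.zero_mem, (colSpace_le_iff _ _).2 fun j => U.zero_mem⟩
  smul_mem' := by
    rintro c a ⟨haC, ha⟩
    refine ⟨C.smul_mem c haC, (colSpace_le_iff _ _).2 fun j => ?_⟩
    have h := U.smul_mem c ((colSpace_le_iff a U).1 ha j)
    rw [Matrix.transpose_smul]; exact h

/-- Orthogonal complement with respect to the standard (dot-product) bilinear form. -/
def perp {n : ℕ} (U : Submodule F (Fin n → F)) : Submodule F (Fin n → F) where
  carrier := {v | ∀ u ∈ U, v ⬝ᵥ u = 0}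
  add_mem' := by
    intro a b ha hb u hu
    rw [add_dotProduct, ha u hu, hb u hu, add_zero]
  zero_mem' := by
    intro u hu
    rw [zero_dotProduct]
  smul_mem' := by
    intro c a ha u hu
    rw [smul_dotProduct, ha u hu, smul_zero]

/-- The minimum rank distance of a matrix code. -/
noncomputable def minRankDist {n m : ℕ} (C : Submodule F (Matrix (Fin n) (Fin m) F)) : ℕ :=
  sInf {r : ℕ | ∃ M ∈ C, M ≠ 0 ∧ M.rank = r}

/-- The rank function of the q-polymatroid associated to a matrix rank-metric code. -/
noncomputable def rhoCode {n m : ℕ} (C : Submodule F (Matrix (Fin n) (Fin m) F))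
    (U : Submodule F (Fin n → F)) : ℚ :=
  ((Module.finrank F C : ℚ) - (Module.finrank F (codeCU C (perp U)) : ℚ)) / (m : ℚ)

/-- The coordinate 3-space spanned by `e_a, e_b, e_c` in `F_q^9`. -/
def tri (a b c : Fin 9) : Submodule F (Fin 9 → F) :=
  Submodule.span F {Pi.single a 1, Pi.single b 1, Pi.single c 1}

/-- The eight special 3-spaces of the non-Pappus q-matroid. -/
def NPset : Set (Submodule F (Fin 9 → F)) :=
  {tri 0 1 2, tri 0 5 7, tri 0 4 6, tri 1 3 6, tri 1 5 8, tri 2 3 7, tri 2 4 8, tri 3 4 5}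

open scoped Classical in
/-- The rank function of the non-Pappus q-matroid. -/
noncomputable def rhoNP (U : Submodule F (Fin 9 → F)) : ℚ :=
  if U ∈ (NPset : Set (Submodule F (Fin 9 → F))) then 2
  else if Module.finrank F U ≤ 3 then (Module.finrank F U : ℚ) else 3

/-! Comparing with `ρ(E) = 3` shows `dim C = 3m`, and that `ρ(U) = ρ(E)` forces `C(U^⊥) = 0`.
Every `U` of dimension at least `4` has `ρ(U) = 3`; taking `U = colsp(M)^⊥` for a codeword `M`
of rank at most `5` puts `M` in `C(U^⊥) = 0`. A line `X` of the configuration has `ρ(X) = 2`, so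
`C(X^⊥)` contains a nonzero codeword, whose rank is at least `6` and at most `m`. -/

open Module

section Perp

variable {n : ℕ}

lemma perp_eq_comap_dualAnnihilator (U : Submodule F (Fin n → F)) :
    perp U = U.dualAnnihilator.comap (dotProductEquiv F (Fin n)).toLinearMap := by
  ext v
  simp [perp, Submodule.mem_dualAnnihilator]

lemma finrank_add_finrank_perp (U : Submodule F (Fin n → F)) :
    finrank F U + finrank F (perp U) = n := by
  rw [perp_eq_comap_dualAnnihilator, Submodule.comap_equiv_eq_map_symm,
    LinearEquiv.finrank_map_eq, Subspace.finrank_add_finrank_dualAnnihilator_eq,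
    finrank_fin_fun]

lemma perp_top : perp (⊤ : Submodule F (Fin n → F)) = ⊥ := by
  have h := finrank_add_finrank_perp (⊤ : Submodule F (Fin n → F))
  rw [finrank_top, finrank_fin_fun] at h
  exact Submodule.finrank_eq_zero.mp (by omega)

lemma le_perp_perp (U : Submodule F (Fin n → F)) : U ≤ perp (perp U) :=
  fun v hv w hw => by rw [dotProduct_comm]; exact hw v hv

end Perp

section Code

variable {n m : ℕ} (C : Submodule F (Matrix (Fin n) (Fin m) F))

lemma rank_eq_finrank_colSpace (M : Matrix (Fin n) (Fin m) F) :
    M.rank = finrank F (colSpace M) := by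
  rw [Matrix.rank, Matrix.range_mulVecLin, colSpace]
  rfl

lemma colSpace_eq_bot_iff {M : Matrix (Fin n) (Fin m) F} : colSpace M = ⊥ ↔ M = 0 := by
  rw [colSpace, Submodule.span_eq_bot]
  constructor
  · intro h
    ext i j
    exact congrFun (h _ ⟨j, rfl⟩) i
  · rintro rfl _ ⟨j, rfl⟩
    rfl

lemma codeCU_bot : codeCU C ⊥ = ⊥ :=
  eq_bot_iff.2 fun _ hM => (Submodule.mem_bot F).2 (colSpace_eq_bot_iff.1 (le_bot_iff.1 hM.2))

lemma rhoCode_top : rhoCode C ⊤ = finrank F C / m := by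
  rw [rhoCode, perp_top, codeCU_bot, finrank_bot, Nat.cast_zero, sub_zero]

lemma rhoCode_eq_rhoCode_top_iff (hm : m ≠ 0) (U : Submodule F (Fin n → F)) :
    rhoCode C U = rhoCode C ⊤ ↔ codeCU C (perp U) = ⊥ := by
  rw [rhoCode, rhoCode_top, div_left_inj' (Nat.cast_ne_zero.2 hm), sub_eq_self,
    Nat.cast_eq_zero, Submodule.finrank_eq_zero]

lemma lt_rank_of_rhoCode_eq_rhoCode_top (hm : m ≠ 0) {r : ℕ}
    (h : ∀ U : Submodule F (Fin n → F), n - r ≤ finrank F U → rhoCode C U = rhoCode C ⊤)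
    {M : Matrix (Fin n) (Fin m) F} (hMC : M ∈ C) (hM : M ≠ 0) : r < M.rank := by
  by_contra! hle
  have hdim := finrank_add_finrank_perp (colSpace M)
  rw [← rank_eq_finrank_colSpace] at hdim
  have hbot := (rhoCode_eq_rhoCode_top_iff C hm _).1 (h (perp (colSpace M)) (by omega))
  exact hM ((Submodule.mem_bot F).1 (hbot ▸ ⟨hMC, le_perp_perp _⟩))

end Code

lemma finrank_tri_le (a b c : Fin 9) : finrank F (tri a b c : Submodule F (Fin 9 → F)) ≤ 3 := by
  classical
  have h := finrank_span_finset_le_card (R := F)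
    ({Pi.single a 1, Pi.single b 1, Pi.single c 1} : Finset (Fin 9 → F))
  rw [Finset.coe_insert, Finset.coe_insert, Finset.coe_singleton] at h
  exact h.trans Finset.card_le_three

lemma finrank_le_three_of_mem_NPset {X : Submodule F (Fin 9 → F)} (hX : X ∈ NPset) :
    finrank F X ≤ 3 := by
  simp only [NPset, Set.mem_insert_iff, Set.mem_singleton_iff] at hX
  rcases hX with rfl | rfl | rfl | rfl | rfl | rfl | rfl | rfl <;> exact finrank_tri_le _ _ _

lemma rhoNP_of_mem_NPset {X : Submodule F (Fin 9 → F)} (hX : X ∈ NPset) : rhoNP X = 2 := by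
  rw [rhoNP, if_pos hX]

lemma rhoNP_of_three_lt_finrank {U : Submodule F (Fin 9 → F)} (hU : 3 < finrank F U) :
    rhoNP U = 3 := by
  rw [rhoNP, if_neg fun h => (finrank_le_three_of_mem_NPset h).not_gt hU, if_neg hU.not_ge]

theorem nonPappus_code_basic_general {m : ℕ} (hm : 0 < m)
    (C : Submodule F (Matrix (Fin 9) (Fin m) F))
    (hrep : ∀ U : Submodule F (Fin 9 → F), rhoCode C U = rhoNP U) :
    Module.finrank F C = 3 * m ∧ (∀ M ∈ C, M ≠ 0 → 6 ≤ M.rank) ∧ 6 ≤ m := by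
  have hm0 : m ≠ 0 := hm.ne'
  have hρtop : rhoCode C ⊤ = 3 := by
    rw [hrep, rhoNP_of_three_lt_finrank (by simp)]
  have hdim : finrank F C = 3 * m := by
    rw [rhoCode_top, div_eq_iff (Nat.cast_ne_zero.2 hm0)] at hρtop
    exact_mod_cast hρtop
  have hdist : ∀ M ∈ C, M ≠ 0 → 6 ≤ M.rank := fun M hMC hM =>
    lt_rank_of_rhoCode_eq_rhoCode_top C hm0 (r := 5)
      (fun U hU => by rw [hρtop, hrep, rhoNP_of_three_lt_finrank (by omega)]) hMC hM
  refine ⟨hdim, hdist, ?_⟩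
  have hline : tri 0 1 2 ∈ (NPset : Set (Submodule F (Fin 9 → F))) := Set.mem_insert _ _
  have hne : codeCU C (perp (tri 0 1 2)) ≠ ⊥ := by
    rw [Ne, ← rhoCode_eq_rhoCode_top_iff C hm0, hρtop, hrep, rhoNP_of_mem_NPset hline]
    norm_num
  obtain ⟨M, ⟨hMC, -⟩, hM⟩ := Submodule.exists_mem_ne_zero_of_ne_bot hne
  exact (hdist M hMC hM).trans (by simpa using M.rank_le_card_width)

/-- any code representing the non-Pappus q-matroid has dimension `3m`,
minimum rank distance at least `6`, and in particular `m ≥ 6`. -/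
theorem nonPappus_code_basic [Fintype F] {m : ℕ} (hm : 0 < m)
    (C : Submodule F (Matrix (Fin 9) (Fin m) F))
    (hrep : ∀ U : Submodule F (Fin 9 → F), rhoCode C U = rhoNP U) :
    Module.finrank F C = 3 * m ∧ (∀ M ∈ C, M ≠ 0 → 6 ≤ M.rank) ∧ 6 ≤ m :=
  nonPappus_code_basic_general hm C hrep
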